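/- arXiv:0709.2196 — 4 statements merged into one kernel-verified Lean document; each statement's English description precedes it below -/
import Mathlib

section
/- If F is three times continuously differentiable on X and D_F is symmetric (D_F(p||q) = D_F(q||p) for all p, q ∈ X), then the Hessian ∇²F is constant on X. -/
open scoped RealInnerProductSpace

/-! Symmetry of `D_F` says `2 (F x - F q) = ⟪∇F x + ∇F q, x - q⟫` on `X`. Differentiating this
in `x` at `p` gives `∇F p - ∇F q = (∇²F p)ᵀ (p - q)`, so for fixed `p` the gradient is affine on
`X` with linear part `(∇²F p)ᵀ`; hence `∇²F q = (∇²F p)ᵀ` for all `p, q ∈ X`, which is constant. -/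

open ContinuousLinearMap

theorem fderiv_eq_of_eqOn_affine {𝕜 E G : Type*} [NontriviallyNormedField 𝕜]
    [NormedAddCommGroup E] [NormedSpace 𝕜 E] [NormedAddCommGroup G] [NormedSpace 𝕜 G]
    {X : Set E} (hX : IsOpen X) {g : E → G} {c : G} {A : E →L[𝕜] G}
    (h : Set.EqOn g (fun x => c + A x) X) {q : E} (hq : q ∈ X) :
    fderiv 𝕜 g q = A :=
  ((A.hasFDerivAt.const_add c).congr_of_eventuallyEq
    (Filter.eventuallyEq_of_mem (hX.mem_nhds hq) h)).fderiv

section Bregman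

variable {E : Type*} [NormedAddCommGroup E] [InnerProductSpace ℝ E] [CompleteSpace E]
  {X : Set E} {F : E → ℝ} {g : E → E}

theorem differentiableOn_of_hasGradientAt_of_contDiffOn (hX : IsOpen X)
    (hF : ContDiffOn ℝ 2 F X) (hg : ∀ x ∈ X, HasGradientAt F (g x) x) :
    DifferentiableOn ℝ g X := by
  have hdual : ContDiffOn ℝ 1 ((InnerProductSpace.toDual ℝ E).symm ∘ fderiv ℝ F) X :=
    (InnerProductSpace.toDual ℝ E).symm.contDiff.comp_contDiffOn
      (hF.fderiv_of_isOpen hX (by norm_num))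
  refine (hdual.differentiableOn one_ne_zero).congr fun x hx => ?_
  simp [(hg x hx).hasFDerivAt.fderiv]

theorem sub_eq_adjoint_fderiv_of_bregman_symm (hX : IsOpen X)
    (hg : ∀ x ∈ X, HasGradientAt F (g x) x)
    (hsymm : ∀ p ∈ X, ∀ q ∈ X, F p - F q - ⟪g q, p - q⟫ = F q - F p - ⟪g p, q - p⟫)
    {p q : E} (hp : p ∈ X) (hq : q ∈ X) (hgp : DifferentiableAt ℝ g p) :
    g p - g q = adjoint (fderiv ℝ g p) (p - q) := by
  set φ : E → ℝ := fun x => 2 * F x - ⟪g x + g q, x - q⟫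
  have hφ_const : Set.EqOn φ (fun _ => 2 * F q) X := fun x hx => by
    have h := hsymm x hx q hq
    rw [← neg_sub x q, inner_neg_right] at h
    simp only [φ, inner_add_left]
    linarith
  have hφ_zero : HasFDerivAt φ (0 : E →L[ℝ] ℝ) p :=
    (hasFDerivAt_const _ p).congr_of_eventuallyEq
      (Filter.eventuallyEq_of_mem (hX.mem_nhds hp) hφ_const)
  have hφ := ((hg p hp).hasFDerivAt.const_mul 2).sub
    ((hgp.hasFDerivAt.add_const (g q)).inner ℝ ((hasFDerivAt_id p).sub_const q))
  refine ext_inner_right ℝ fun v => ?_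
  have hv := congrArg (· v) (hφ.unique hφ_zero)
  simp only [sub_apply, smul_apply, comp_apply, prod_apply, fderivInnerCLM_apply, coe_id', id_eq,
    InnerProductSpace.toDual_apply_apply, zero_apply, smul_eq_mul, inner_add_left] at hv
  rw [adjoint_inner_left, real_inner_comm _ (p - q), inner_sub_left]
  linarith

theorem fderiv_eq_adjoint_fderiv_of_bregman_symm (hX : IsOpen X)
    (hg : ∀ x ∈ X, HasGradientAt F (g x) x) (hg_diff : DifferentiableOn ℝ g X)
    (hsymm : ∀ p ∈ X, ∀ q ∈ X, F p - F q - ⟪g q, p - q⟫ = F q - F p - ⟪g p, q - p⟫)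
    {p q : E} (hp : p ∈ X) (hq : q ∈ X) :
    fderiv ℝ g q = adjoint (fderiv ℝ g p) := by
  refine fderiv_eq_of_eqOn_affine (c := g p - adjoint (fderiv ℝ g p) p) hX (fun x hx => ?_) hq
  have h := sub_eq_adjoint_fderiv_of_bregman_symm hX hg hsymm hp hx
    ((hg_diff p hp).differentiableAt (hX.mem_nhds hp))
  rw [map_sub] at h
  show g x = g p - _ + _
  rw [sub_add, ← h, sub_sub_cancel]

end Bregman

theorem constant_hessian_of_bregman_symm_general {d : ℕ}
    (X : Set (EuclideanSpace ℝ (Fin d))) (hXopen : IsOpen X)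
    (F : EuclideanSpace ℝ (Fin d) → ℝ)
    (gradF : EuclideanSpace ℝ (Fin d) → EuclideanSpace ℝ (Fin d))
    (hF3 : ContDiffOn ℝ 3 F X)
    (hgrad : ∀ x ∈ X, HasGradientAt F (gradF x) x)
    (hsymm : ∀ p ∈ X, ∀ q ∈ X,
      F p - F q - ⟪gradF q, p - q⟫ = F q - F p - ⟪gradF p, q - p⟫) :
    ∀ p ∈ X, ∀ q ∈ X, fderiv ℝ gradF p = fderiv ℝ gradF q := by
  intro p hp q hq
  have hdiff := differentiableOn_of_hasGradientAt_of_contDiffOn hXopen (hF3.of_le (by norm_num))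
    hgrad
  exact (fderiv_eq_adjoint_fderiv_of_bregman_symm hXopen hgrad hdiff hsymm hp hp).trans
    (fderiv_eq_adjoint_fderiv_of_bregman_symm hXopen hgrad hdiff hsymm hp hq).symm

/-- If `F` is `C³` on `X` and its Bregman divergence is symmetric, then the Hessian
of `F` (the Fréchet derivative of the gradient) is constant on `X`. -/
theorem constant_hessian_of_bregman_symm {d : ℕ}
    (X : Set (EuclideanSpace ℝ (Fin d))) (hXopen : IsOpen X) (hXconv : Convex ℝ X)
    (F : EuclideanSpace ℝ (Fin d) → ℝ)
    (gradF : EuclideanSpace ℝ (Fin d) → EuclideanSpace ℝ (Fin d))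
    (hF : StrictConvexOn ℝ X F)
    (hF3 : ContDiffOn ℝ 3 F X)
    (hgrad : ∀ x ∈ X, HasGradientAt F (gradF x) x)
    (hsymm : ∀ p ∈ X, ∀ q ∈ X,
      F p - F q - ⟪gradF q, p - q⟫ = F q - F p - ⟪gradF p, q - p⟫) :
    ∀ p ∈ X, ∀ q ∈ X, fderiv ℝ gradF p = fderiv ℝ gradF q :=
  constant_hessian_of_bregman_symm_general X hXopen F gradF hF3 hgrad hsymm
end

section
/- The first-type Bregman bisector {x ∈ X : D_F(x||p) = D_F(x||q)} is the intersection with X of a hyperplane, namely the set of x satisfying ⟨x, ∇F(p) - ∇F(q)⟩ + F(p) - ⟨p, ∇F(p)⟩ - F(q) + ⟨q, ∇F(q)⟩ = 0; moreover p and q lie strictly on opposite sides of this hyperplane when p ≠ q. -/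
open scoped RealInnerProductSpace

/-! Restricting `F` to the line through `p` and `q` turns strict convexity into the strict
tangent-line inequality `F q + ⟪∇F q, p - q⟫ < F p`, i.e. `D_F(p‖q) > 0` for `p ≠ q`. The
difference `D_F(x‖q) - D_F(x‖p)` is affine in `x` (the `F x` terms cancel) and is exactly the
hyperplane's defining form; at `x = p` it equals `D_F(p‖q) > 0`, at `x = q` it equals
`-D_F(q‖p) < 0`. -/

theorem StrictConvexOn.comp_affineMap {𝕜 E F β : Type*} [Ring 𝕜] [PartialOrder 𝕜]
    [AddCommGroup E] [AddCommGroup F] [AddCommMonoid β] [PartialOrder β]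
    [Module 𝕜 E] [Module 𝕜 F] [SMul 𝕜 β] {s : Set F} {f : F → β}
    (g : E →ᵃ[𝕜] F) (hg : Function.Injective g) (hf : StrictConvexOn 𝕜 s f) :
    StrictConvexOn 𝕜 (g ⁻¹' s) (f ∘ g) :=
  ⟨hf.1.affine_preimage g, fun x hx y hy hxy a b ha hb hab =>
    calc
      (f ∘ g) (a • x + b • y) = f (a • g x + b • g y) := by
        rw [Function.comp_apply, Convex.combo_affine_apply hab]
      _ < a • f (g x) + b • f (g y) := hf.2 hx hy (hg.ne hxy) ha hb hab⟩

theorem StrictConvexOn.add_fderiv_lt {E : Type*} [NormedAddCommGroup E] [NormedSpace ℝ E]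
    {s : Set E} {f : E → ℝ} {f' : E →L[ℝ] ℝ} {x y : E}
    (hf : StrictConvexOn ℝ s f) (hx : x ∈ s) (hy : y ∈ s) (hxy : x ≠ y)
    (hf' : HasFDerivAt f f' x) :
    f x + f' (y - x) < f y := by
  have hline : StrictConvexOn ℝ (AffineMap.lineMap x y ⁻¹' s) (f ∘ AffineMap.lineMap x y) :=
    hf.comp_affineMap _ (AffineMap.lineMap_injective ℝ hxy)
  have hderiv : HasDerivAt (f ∘ AffineMap.lineMap x y) (f' (y - x)) (0 : ℝ) := by
    refine HasFDerivAt.comp_hasDerivAt (0 : ℝ) ?_ AffineMap.hasDerivAt_lineMap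
    rwa [AffineMap.lineMap_apply_zero]
  have hslope := hline.lt_slope_of_hasDerivAt (x := 0) (y := 1)
    (by simpa using hx) (by simpa using hy) one_pos hderiv
  simp only [slope_def_field, Function.comp_apply, AffineMap.lineMap_apply_zero,
    AffineMap.lineMap_apply_one, sub_zero, div_one] at hslope
  linarith

theorem StrictConvexOn.add_inner_lt_of_hasGradientAt {E : Type*} [NormedAddCommGroup E]
    [InnerProductSpace ℝ E] [CompleteSpace E] {s : Set E} {f : E → ℝ} {g x y : E}
    (hf : StrictConvexOn ℝ s f) (hx : x ∈ s) (hy : y ∈ s) (hxy : x ≠ y)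
    (hg : HasGradientAt f g x) :
    f x + ⟪g, y - x⟫ < f y := by
  simpa using hf.add_fderiv_lt hx hy hxy hg.hasFDerivAt

theorem inner_sub_add_sub_eq_bregman_sub_bregman {E : Type*} [NormedAddCommGroup E]
    [InnerProductSpace ℝ E] (x p q gp gq : E) (Fx Fp Fq : ℝ) :
    ⟪x, gp - gq⟫ + Fp - ⟪p, gp⟫ - Fq + ⟪q, gq⟫
      = (Fx - Fq - ⟪gq, x - q⟫) - (Fx - Fp - ⟪gp, x - p⟫) := by
  simp only [inner_sub_right, real_inner_comm x, real_inner_comm p,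
    real_inner_comm q]
  ring

theorem bregman_first_type_bisector_general {d : ℕ}
    (X : Set (EuclideanSpace ℝ (Fin d)))
    (F : EuclideanSpace ℝ (Fin d) → ℝ)
    (gradF : EuclideanSpace ℝ (Fin d) → EuclideanSpace ℝ (Fin d))
    (hF : StrictConvexOn ℝ X F)
    (hgrad : ∀ x ∈ X, HasGradientAt F (gradF x) x)
    (p q : EuclideanSpace ℝ (Fin d)) (hp : p ∈ X) (hq : q ∈ X) (hpq : p ≠ q) :
    {x ∈ X | F x - F p - ⟪gradF p, x - p⟫ = F x - F q - ⟪gradF q, x - q⟫}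
      = {x ∈ X | ⟪x, gradF p - gradF q⟫ + F p - ⟪p, gradF p⟫ - F q + ⟪q, gradF q⟫ = 0} ∧
    0 < ⟪p, gradF p - gradF q⟫ + F p - ⟪p, gradF p⟫ - F q + ⟪q, gradF q⟫ ∧
    ⟪q, gradF p - gradF q⟫ + F p - ⟪p, gradF p⟫ - F q + ⟪q, gradF q⟫ < 0 := by
  have hform (x : EuclideanSpace ℝ (Fin d)) :=
    inner_sub_add_sub_eq_bregman_sub_bregman x p q (gradF p) (gradF q) (F x) (F p) (F q)
  have hpq_pos := hF.add_inner_lt_of_hasGradientAt hq hp hpq.symm (hgrad q hq)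
  have hqp_pos := hF.add_inner_lt_of_hasGradientAt hp hq hpq (hgrad p hp)
  refine ⟨Set.ext fun x => ?_, ?_, ?_⟩
  · simp only [Set.mem_ofPred_eq, hform x, sub_eq_zero]
    exact and_congr_right fun _ => eq_comm
  · simp only [hform p, sub_self, inner_zero_right]
    linarith
  · simp only [hform q, sub_self, inner_zero_right]
    linarith

/-- The first-type Bregman bisector is (the trace on `X` of) a hyperplane, and
`p`, `q` lie strictly on opposite sides of it. -/
theorem bregman_first_type_bisector {d : ℕ}
    (X : Set (EuclideanSpace ℝ (Fin d))) (hXopen : IsOpen X) (hXconv : Convex ℝ X)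
    (F : EuclideanSpace ℝ (Fin d) → ℝ)
    (gradF : EuclideanSpace ℝ (Fin d) → EuclideanSpace ℝ (Fin d))
    (hF : StrictConvexOn ℝ X F)
    (hgrad : ∀ x ∈ X, HasGradientAt F (gradF x) x)
    (p q : EuclideanSpace ℝ (Fin d)) (hp : p ∈ X) (hq : q ∈ X) (hpq : p ≠ q) :
    {x ∈ X | F x - F p - ⟪gradF p, x - p⟫ = F x - F q - ⟪gradF q, x - q⟫}
      = {x ∈ X | ⟪x, gradF p - gradF q⟫ + F p - ⟪p, gradF p⟫ - F q + ⟪q, gradF q⟫ = 0} ∧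
    0 < ⟪p, gradF p - gradF q⟫ + F p - ⟪p, gradF p⟫ - F q + ⟪q, gradF q⟫ ∧
    ⟪q, gradF p - gradF q⟫ + F p - ⟪p, gradF p⟫ - F q + ⟪q, gradF q⟫ < 0 :=
  bregman_first_type_bisector_general X F gradF hF hgrad p q hp hq hpq
end

section
/- Bregman Voronoi diagrams are power diagrams: for sites p₁,…,pₙ in X, a point x satisfies D_F(x||pᵢ) ≤ D_F(x||pⱼ) if and only if ‖x - ∇F(pᵢ)‖² - rᵢ² ≤ ‖x - ∇F(pⱼ)‖² - rⱼ², where rₖ² := ‖∇F(pₖ)‖² + 2(F(pₖ) - ⟨pₖ, ∇F(pₖ)⟩). In particular the first-type Bregman Voronoi cell of pᵢ equals the power-diagram cell of the (possibly imaginary) ball centered at ∇F(pᵢ) with squared radius rᵢ². -/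
open scoped RealInnerProductSpace

/-!
Expanding `‖x - ∇F(p)‖²` shows that the power of `x` with respect to the ball of `p` is
`2 D_F(x‖p) + ‖x‖² - 2 F(x)`. The last two terms do not depend on the site, so comparing powers
is the same as comparing Bregman divergences.
-/

section

variable {E : Type*} [NormedAddCommGroup E] [InnerProductSpace ℝ E]

theorem power_eq_two_mul_bregman_add (F : E → ℝ) (g p x : E) :
    ‖x - g‖ ^ 2 - (‖g‖ ^ 2 + 2 * (F p - ⟪p, g⟫))
      = 2 * (F x - F p - ⟪g, x - p⟫) + (‖x‖ ^ 2 - 2 * F x) := by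
  rw [norm_sub_sq_real, inner_sub_right, real_inner_comm p, real_inner_comm x]
  ring

theorem bregman_le_iff_power_le (F : E → ℝ) (g₁ g₂ p₁ p₂ x : E) :
    F x - F p₁ - ⟪g₁, x - p₁⟫ ≤ F x - F p₂ - ⟪g₂, x - p₂⟫ ↔
      ‖x - g₁‖ ^ 2 - (‖g₁‖ ^ 2 + 2 * (F p₁ - ⟪p₁, g₁⟫))
        ≤ ‖x - g₂‖ ^ 2 - (‖g₂‖ ^ 2 + 2 * (F p₂ - ⟪p₂, g₂⟫)) := by
  rw [power_eq_two_mul_bregman_add, power_eq_two_mul_bregman_add, add_le_add_iff_right,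
    mul_le_mul_iff_right₀ two_pos]

end

theorem bregman_voronoi_eq_power_diagram_general {d n : ℕ}
    (X : Set (EuclideanSpace ℝ (Fin d)))
    (F : EuclideanSpace ℝ (Fin d) → ℝ)
    (gradF : EuclideanSpace ℝ (Fin d) → EuclideanSpace ℝ (Fin d))
    (p : Fin n → EuclideanSpace ℝ (Fin d))
    (rsq : Fin n → ℝ)
    (hrsq : ∀ k, rsq k = ‖gradF (p k)‖ ^ 2 + 2 * (F (p k) - ⟪p k, gradF (p k)⟫)) :
    (∀ i j, ∀ x ∈ X,
      (F x - F (p i) - ⟪gradF (p i), x - p i⟫ ≤ F x - F (p j) - ⟪gradF (p j), x - p j⟫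
        ↔ ‖x - gradF (p i)‖ ^ 2 - rsq i ≤ ‖x - gradF (p j)‖ ^ 2 - rsq j)) ∧
    (∀ i, {x ∈ X | ∀ j, F x - F (p i) - ⟪gradF (p i), x - p i⟫
                      ≤ F x - F (p j) - ⟪gradF (p j), x - p j⟫}
        = {x ∈ X | ∀ j, ‖x - gradF (p i)‖ ^ 2 - rsq i ≤ ‖x - gradF (p j)‖ ^ 2 - rsq j}) := by
  have bregman_le_iff : ∀ i j x,
      (F x - F (p i) - ⟪gradF (p i), x - p i⟫ ≤ F x - F (p j) - ⟪gradF (p j), x - p j⟫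
        ↔ ‖x - gradF (p i)‖ ^ 2 - rsq i ≤ ‖x - gradF (p j)‖ ^ 2 - rsq j) := by
    intro i j x
    rw [hrsq, hrsq]
    exact bregman_le_iff_power_le F _ _ _ _ x
  refine ⟨fun i j x _ => bregman_le_iff i j x, fun i => ?_⟩
  exact Set.sep_ext_iff.mpr fun x _ => forall_congr' fun j => bregman_le_iff i j x

/-- Bregman Voronoi diagrams are power diagrams: `D_F(x‖pᵢ) ≤ D_F(x‖pⱼ)` iff the power of
`x` w.r.t. the ball centered at `∇F(pᵢ)` of squared radius
`‖∇F(pᵢ)‖² + 2(F(pᵢ) - ⟨pᵢ, ∇F(pᵢ)⟩)` is at most the power w.r.t. the ball of `pⱼ`;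
consequently the first-type Bregman Voronoi cell of `pᵢ` equals the power cell. -/
theorem bregman_voronoi_eq_power_diagram {d n : ℕ}
    (X : Set (EuclideanSpace ℝ (Fin d))) (hXopen : IsOpen X) (hXconv : Convex ℝ X)
    (F : EuclideanSpace ℝ (Fin d) → ℝ)
    (gradF : EuclideanSpace ℝ (Fin d) → EuclideanSpace ℝ (Fin d))
    (hF : StrictConvexOn ℝ X F)
    (hgrad : ∀ x ∈ X, HasGradientAt F (gradF x) x)
    (p : Fin n → EuclideanSpace ℝ (Fin d)) (hp : ∀ i, p i ∈ X)
    (rsq : Fin n → ℝ)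
    (hrsq : ∀ k, rsq k = ‖gradF (p k)‖ ^ 2 + 2 * (F (p k) - ⟪p k, gradF (p k)⟫)) :
    (∀ i j, ∀ x ∈ X,
      (F x - F (p i) - ⟪gradF (p i), x - p i⟫ ≤ F x - F (p j) - ⟪gradF (p j), x - p j⟫
        ↔ ‖x - gradF (p i)‖ ^ 2 - rsq i ≤ ‖x - gradF (p j)‖ ^ 2 - rsq j)) ∧
    (∀ i, {x ∈ X | ∀ j, F x - F (p i) - ⟪gradF (p i), x - p i⟫
                      ≤ F x - F (p j) - ⟪gradF (p j), x - p j⟫}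
        = {x ∈ X | ∀ j, ‖x - gradF (p i)‖ ^ 2 - rsq i ≤ ‖x - gradF (p j)‖ ^ 2 - rsq j}) :=
  bregman_voronoi_eq_power_diagram_general X F gradF p rsq hrsq
end

section
/- k-order reduction to weighted diagram: for a subset S_i of k sites with average divergence D_i(x) = (1/k)·Σ_{p∈S_i} D_F(x||p), one has D_i(x) = D_F(x||c_i) + w_i, where c_i = (∇F)⁻¹((1/k)·Σ_{p∈S_i} ∇F(p)) and w_i = F(c_i) - ⟨c_i, ∇F(c_i)⟩ - (1/k)·Σ_{p∈S_i}(F(p) - ⟨p, ∇F(p)⟩). -/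
/-!
Changing the base point of a Bregman divergence from `c` to `p` changes it by a constant plus the
linear function `x ↦ ⟪∇F c - ∇F p, x⟫`. Averaging over the sites, these linear terms cancel exactly
because `∇F c` is the average of the `∇F p`; only the constant, the weight `w`, survives.
-/

open scoped RealInnerProductSpace

variable {E : Type*} [NormedAddCommGroup E] [InnerProductSpace ℝ E]

/-- `D_F(x ‖ p)`, with `g` playing the role of `∇F`. -/
def bregmanDiv (F : E → ℝ) (g : E → E) (x p : E) : ℝ := F x - F p - ⟪g p, x - p⟫

variable (F : E → ℝ) (g : E → E)

theorem bregmanDiv_eq_bregmanDiv_add (x p c : E) :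
    bregmanDiv F g x p = bregmanDiv F g x c + ((F c - ⟪c, g c⟫) - (F p - ⟪p, g p⟫))
      + ⟪g c - g p, x⟫ := by
  simp only [bregmanDiv, inner_sub_right, real_inner_comm x, real_inner_comm c,
    real_inner_comm p]
  ring

open Finset in
theorem sum_mul_bregmanDiv_eq {S : Finset E} {μ : E → ℝ} (hμ : ∑ p ∈ S, μ p = 1) {c : E}
    (hc : g c = ∑ p ∈ S, μ p • g p) (x : E) :
    ∑ p ∈ S, μ p * bregmanDiv F g x p
      = bregmanDiv F g x c + (F c - ⟪c, g c⟫ - ∑ p ∈ S, μ p * (F p - ⟪p, g p⟫)) := by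
  have hlinear : ∑ p ∈ S, μ p * ⟪g c - g p, x⟫ = 0 := by
    calc ∑ p ∈ S, μ p * ⟪g c - g p, x⟫ = ⟪∑ p ∈ S, μ p • (g c - g p), x⟫ := by
          simp only [sum_inner, real_inner_smul_left]
      _ = ⟪g c - g c, x⟫ := by
          rw [sum_congr rfl fun p _ => smul_sub (μ p) (g c) (g p), sum_sub_distrib, ← sum_smul,
            hμ, one_smul, ← hc]
      _ = 0 := by rw [sub_self, inner_zero_left]
  calc ∑ p ∈ S, μ p * bregmanDiv F g x p
      = ∑ p ∈ S, (μ p * (bregmanDiv F g x c + (F c - ⟪c, g c⟫)) - μ p * (F p - ⟪p, g p⟫)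
          + μ p * ⟪g c - g p, x⟫) :=
        sum_congr rfl fun p _ => by rw [bregmanDiv_eq_bregmanDiv_add F g x p c]; ring
    _ = (∑ p ∈ S, μ p) * (bregmanDiv F g x c + (F c - ⟪c, g c⟫))
          - ∑ p ∈ S, μ p * (F p - ⟪p, g p⟫) + ∑ p ∈ S, μ p * ⟪g c - g p, x⟫ := by
        rw [sum_add_distrib, sum_sub_distrib, sum_mul]
    _ = _ := by rw [hμ, hlinear]; ring

theorem korder_bregman_reduction_general {d : ℕ}
    (X : Set (EuclideanSpace ℝ (Fin d)))
    (F : EuclideanSpace ℝ (Fin d) → ℝ)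
    (gradF : EuclideanSpace ℝ (Fin d) → EuclideanSpace ℝ (Fin d))
    (k : ℕ) (hk : 0 < k)
    (S : Finset (EuclideanSpace ℝ (Fin d))) (hcard : S.card = k)
    (c : EuclideanSpace ℝ (Fin d))
    (hcavg : gradF c = (k : ℝ)⁻¹ • ∑ p ∈ S, gradF p)
    (w : ℝ)
    (hw : w = F c - ⟪c, gradF c⟫ - (k : ℝ)⁻¹ * ∑ p ∈ S, (F p - ⟪p, gradF p⟫)) :
    ∀ x ∈ X,
      (k : ℝ)⁻¹ * ∑ p ∈ S, (F x - F p - ⟪gradF p, x - p⟫)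
        = (F x - F c - ⟪gradF c, x - c⟫) + w := by
  intro x _
  have hμ : ∑ _p ∈ S, (k : ℝ)⁻¹ = 1 := by
    rw [Finset.sum_const, hcard, nsmul_eq_mul, mul_inv_cancel₀ (by exact_mod_cast hk.ne')]
  have havg := sum_mul_bregmanDiv_eq F gradF hμ (by rwa [← Finset.smul_sum]) x
  rw [← Finset.mul_sum, ← Finset.mul_sum] at havg
  rw [hw]
  exact havg

/-- `k`-order reduction to a weighted diagram: the average Bregman divergence to a set of `k`
sites equals the Bregman divergence to the point `cᵢ` whose gradient is the average of the
site gradients, plus the weight `wᵢ`. -/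
theorem korder_bregman_reduction {d : ℕ}
    (X : Set (EuclideanSpace ℝ (Fin d))) (hXopen : IsOpen X) (hXconv : Convex ℝ X)
    (F : EuclideanSpace ℝ (Fin d) → ℝ)
    (gradF : EuclideanSpace ℝ (Fin d) → EuclideanSpace ℝ (Fin d))
    (hF : StrictConvexOn ℝ X F)
    (hgrad : ∀ x ∈ X, HasGradientAt F (gradF x) x)
    (k : ℕ) (hk : 0 < k)
    (S : Finset (EuclideanSpace ℝ (Fin d))) (hcard : S.card = k) (hS : ↑S ⊆ X)
    (c : EuclideanSpace ℝ (Fin d)) (hc : c ∈ X)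
    (hcavg : gradF c = (k : ℝ)⁻¹ • ∑ p ∈ S, gradF p)
    (w : ℝ)
    (hw : w = F c - ⟪c, gradF c⟫ - (k : ℝ)⁻¹ * ∑ p ∈ S, (F p - ⟪p, gradF p⟫)) :
    ∀ x ∈ X,
      (k : ℝ)⁻¹ * ∑ p ∈ S, (F x - F p - ⟪gradF p, x - p⟫)
        = (F x - F c - ⟪gradF c, x - c⟫) + w :=
  korder_bregman_reduction_general X F gradF k hk S hcard c hcavg w hw
end
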